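/- Let G be a finite directed flow network with four terminals s, a, b, c, with (s ↛ a) ≥ max{(s ↛ b), (s ↛ c)} and (s ↛ ab) ≥ (s ↛ ac). Define H on vertices {s, a, b, c, x} with edges: s→a of capacity (s ↛ a); s→b of capacity (s ↛ ab) − (s ↛ a); s→c of capacity (s ↛ abc) − (s ↛ ab); a→x of capacity (s ↛ bc) + (s ↛ a) − (s ↛ abc); b→x of capacity (s ↛ ac) + (s ↛ ab) − (s ↛ a) − (s ↛ abc); x→b of capacity (s ↛ b) + (s ↛ a) − (s ↛ ab); x→c of capacity (s ↛ c) + (s ↛ ab) − (s ↛ abc), where all min-cut values are measured in G. Then for every nonempty subset T of {a,b,c}, the minimum cut value (s ↛ T) in H equals (s ↛ T) in G. -/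

import Mathlib

open Finset

/-- Capacity of the cut determined by vertex set `A`: total capacity of edges leaving `A`. -/
def cutCap {V : Type} [Fintype V] [DecidableEq V] (c : V → V → ℝ) (A : Finset V) : ℝ :=
  ∑ u ∈ A, ∑ v ∈ Aᶜ, c u v

/-- Minimum capacity of a cut with all of `S` on the source side and all of `T` on the sink side. -/
noncomputable def minCut {V : Type} [Fintype V] [DecidableEq V] (c : V → V → ℝ) (S T : Finset V) : ℝ :=
  sInf {x : ℝ | ∃ A : Finset V, S ⊆ A ∧ Disjoint T A ∧ x = cutCap c A}

/-- Net outflow of `f` at vertex `v`. -/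
def netOut {V : Type} [Fintype V] (f : V → V → ℝ) (v : V) : ℝ :=
  (∑ w, f v w) - ∑ w, f w v

/-- `f` is an external flow in the network with capacities `c`, terminals `q` and
terminal net-outflow values `x`. -/
def IsExtFlow {V : Type} [Fintype V] {k : ℕ} (c f : V → V → ℝ) (q : Fin k → V)
    (x : Fin k → ℝ) : Prop :=
  (∀ u v, 0 ≤ f u v ∧ f u v ≤ c u v) ∧
  (∀ v, (∀ i, q i ≠ v) → netOut f v = 0) ∧
  (∀ i, netOut f (q i) = x i)

/-- The 5-vertex mimicking network for single-source external flows, on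
vertices `s=0, a=1, b=2, c=3, x=4` with the seven given edge capacities. -/
def cap7 (α β γ δ ε ζ η : ℝ) (u v : Fin 5) : ℝ :=
  if u = 0 ∧ v = 1 then α
  else if u = 0 ∧ v = 2 then β
  else if u = 0 ∧ v = 3 then γ
  else if u = 1 ∧ v = 4 then δ
  else if u = 2 ∧ v = 4 then ε
  else if u = 4 ∧ v = 2 then ζ
  else if u = 4 ∧ v = 3 then η
  else 0

/-! The terminal cut function `T ↦ (s ↛ T)` of a network with nonnegative capacities is
monotone and submodular and vanishes at `∅`, by uncrossing optimal cuts. Conversely, the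
five-vertex network built from any such function `f` on three terminals has `f` as its cut
function: for each `T` one explicit cut costs exactly `f T`, and each of the sixteen cuts
containing the source costs at least `f` of the terminals it separates, by one of a handful of
monotonicity and submodularity inequalities. -/

section MinCut

variable {V : Type} [Fintype V] [DecidableEq V] {c : V → V → ℝ}

theorem cutCap_eq_sum_ite (c : V → V → ℝ) (A : Finset V) :
    cutCap c A = ∑ u, ∑ v, if u ∈ A ∧ v ∉ A then c u v else 0 := by
  simp only [cutCap, ite_and, ← mem_compl, sum_ite_irrel, sum_const_zero, sum_ite_mem, univ_inter]

theorem cutCap_nonneg (hc : ∀ u v, 0 ≤ c u v) (A : Finset V) : 0 ≤ cutCap c A :=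
  sum_nonneg fun u _ => sum_nonneg fun v _ => hc u v

theorem cutCap_univ (c : V → V → ℝ) : cutCap c univ = 0 := by
  simp [cutCap]

theorem cutCap_union_add_cutCap_inter_le (hc : ∀ u v, 0 ≤ c u v) (A B : Finset V) :
    cutCap c (A ∪ B) + cutCap c (A ∩ B) ≤ cutCap c A + cutCap c B := by
  simp only [cutCap_eq_sum_ite, ← sum_add_distrib]
  refine sum_le_sum fun u _ => sum_le_sum fun v _ => ?_
  by_cases hA : u ∈ A <;> by_cases hB : u ∈ B <;> by_cases hA' : v ∈ A <;>
    by_cases hB' : v ∈ B <;> simp [hA, hB, hA', hB', hc u v]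

theorem finite_setOf_cutCap (c : V → V → ℝ) (S T : Finset V) :
    {x | ∃ A : Finset V, S ⊆ A ∧ Disjoint T A ∧ x = cutCap c A}.Finite :=
  (Set.finite_range (cutCap c)).subset fun _ ⟨A, _, _, hA⟩ => ⟨A, hA.symm⟩

theorem minCut_le_cutCap {S T A : Finset V} (hS : S ⊆ A) (hT : Disjoint T A) :
    minCut c S T ≤ cutCap c A :=
  csInf_le (finite_setOf_cutCap c S T).bddBelow ⟨A, hS, hT, rfl⟩

theorem exists_cutCap_eq_minCut {S T : Finset V} (h : Disjoint S T) :
    ∃ A, S ⊆ A ∧ Disjoint T A ∧ cutCap c A = minCut c S T := by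
  obtain ⟨A, hS, hT, hA⟩ :
      minCut c S T ∈ {x | ∃ A : Finset V, S ⊆ A ∧ Disjoint T A ∧ x = cutCap c A} :=
    Set.Nonempty.csInf_mem
      ⟨_, Tᶜ, subset_compl_iff_disjoint_right.2 h, disjoint_compl_right, rfl⟩
      (finite_setOf_cutCap c S T)
  exact ⟨A, hS, hT, hA.symm⟩

theorem minCut_nonneg (hc : ∀ u v, 0 ≤ c u v) {S T : Finset V} (h : Disjoint S T) :
    0 ≤ minCut c S T := by
  obtain ⟨A, -, -, hA⟩ := exists_cutCap_eq_minCut (c := c) h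
  exact hA ▸ cutCap_nonneg hc A

theorem minCut_empty (hc : ∀ u v, 0 ≤ c u v) (S : Finset V) : minCut c S ∅ = 0 :=
  le_antisymm
    ((minCut_le_cutCap (subset_univ S) (disjoint_empty_left _)).trans_eq (cutCap_univ c))
    (minCut_nonneg hc (disjoint_empty_right S))

theorem minCut_mono {S T T' : Finset V} (hT : T ⊆ T') (h : Disjoint S T') :
    minCut c S T ≤ minCut c S T' := by
  obtain ⟨A, hS, hT', hA⟩ := exists_cutCap_eq_minCut (c := c) h
  exact hA ▸ minCut_le_cutCap hS (hT'.mono_left hT)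

theorem minCut_union_add_minCut_inter_le (hc : ∀ u v, 0 ≤ c u v) {S T₁ T₂ : Finset V}
    (h₁ : Disjoint S T₁) (h₂ : Disjoint S T₂) :
    minCut c S (T₁ ∪ T₂) + minCut c S (T₁ ∩ T₂) ≤ minCut c S T₁ + minCut c S T₂ := by
  obtain ⟨A, hSA, hTA, hA⟩ := exists_cutCap_eq_minCut (c := c) h₁
  obtain ⟨B, hSB, hTB, hB⟩ := exists_cutCap_eq_minCut (c := c) h₂
  have hinter : minCut c S (T₁ ∪ T₂) ≤ cutCap c (A ∩ B) :=
    minCut_le_cutCap (subset_inter hSA hSB)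
      (disjoint_union_left.2
        ⟨hTA.mono_right inter_subset_left, hTB.mono_right inter_subset_right⟩)
  have hunion : minCut c S (T₁ ∩ T₂) ≤ cutCap c (A ∪ B) :=
    minCut_le_cutCap (hSA.trans subset_union_left)
      (disjoint_union_right.2
        ⟨hTA.mono_left inter_subset_left, hTB.mono_left inter_subset_right⟩)
  linarith [cutCap_union_add_cutCap_inter_le hc A B]

end MinCut

theorem disjoint_image_of_notMem {V ι : Type} [DecidableEq V] {S : Finset V} {t : ι → V}
    (hS : ∀ i, t i ∉ S) (T : Finset ι) : Disjoint S (T.image t) :=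
  disjoint_right.2 fun _ hv => by obtain ⟨i, -, rfl⟩ := mem_image.1 hv; exact hS i

section TerminalCuts

variable {V ι : Type} [Fintype V] [DecidableEq V] {c : V → V → ℝ} {S : Finset V}
  {t : ι → V}

theorem monotone_minCut_image (hS : ∀ i, t i ∉ S) :
    Monotone fun T : Finset ι => minCut c S (T.image t) :=
  fun _ T' hT => minCut_mono (image_subset_image hT) (disjoint_image_of_notMem hS T')

theorem minCut_image_union_add_minCut_image_inter_le [DecidableEq ι] (hc : ∀ u v, 0 ≤ c u v)
    (ht : Function.Injective t) (hS : ∀ i, t i ∉ S) (T₁ T₂ : Finset ι) :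
    minCut c S ((T₁ ∪ T₂).image t) + minCut c S ((T₁ ∩ T₂).image t) ≤
      minCut c S (T₁.image t) + minCut c S (T₂.image t) := by
  rw [image_union, image_inter_of_injOn _ _ ht.injOn]
  exact minCut_union_add_minCut_inter_le hc (disjoint_image_of_notMem hS T₁)
    (disjoint_image_of_notMem hS T₂)

end TerminalCuts

theorem cutCap_cap7 (α β γ δ ε ζ η : ℝ) (A : Finset (Fin 5)) :
    cutCap (cap7 α β γ δ ε ζ η) A =
      (if 0 ∈ A ∧ 1 ∉ A then α else 0) + (if 0 ∈ A ∧ 2 ∉ A then β else 0) +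
      (if 0 ∈ A ∧ 3 ∉ A then γ else 0) + (if 1 ∈ A ∧ 4 ∉ A then δ else 0) +
      (if 2 ∈ A ∧ 4 ∉ A then ε else 0) + (if 4 ∈ A ∧ 2 ∉ A then ζ else 0) +
      (if 4 ∈ A ∧ 3 ∉ A then η else 0) := by
  simp [cutCap_eq_sum_ite, Fin.sum_univ_five, cap7, add_assoc]

section MimickingNetwork

def mimicCap (f : Finset (Fin 3) → ℝ) : Fin 5 → Fin 5 → ℝ :=
  cap7 (f {0}) (f {0, 1} - f {0}) (f {0, 1, 2} - f {0, 1}) (f {1, 2} + f {0} - f {0, 1, 2})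
    (f {0, 2} + f {0, 1} - f {0} - f {0, 1, 2}) (f {1} + f {0} - f {0, 1})
    (f {2} + f {0, 1} - f {0, 1, 2})

variable {f : Finset (Fin 3) → ℝ}

theorem le_cutCap_mimicCap (hmono : Monotone f)
    (hsub : ∀ T₁ T₂, f (T₁ ∪ T₂) + f (T₁ ∩ T₂) ≤ f T₁ + f T₂) (hempty : f ∅ = 0)
    {A : Finset (Fin 5)} (h0 : 0 ∈ A) :
    f {i | i.succ.castSucc ∉ A} ≤ cutCap (mimicCap f) A := by
  have sub (T₁ T₂ U I : Finset (Fin 3)) (hU : T₁ ∪ T₂ = U) (hI : T₁ ∩ T₂ = I) :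
      f U + f I ≤ f T₁ + f T₂ := hU ▸ hI ▸ hsub T₁ T₂
  have mono (T T' : Finset (Fin 3)) (h : T ⊆ T') : f T ≤ f T' := hmono h
  have := mono ∅ {0} (by decide)
  have := mono {0} {0, 1} (by decide)
  have := mono {1} {0, 1} (by decide)
  have := mono {0, 1} {0, 1, 2} (by decide)
  have := mono {2} {0, 1, 2} (by decide)
  have := mono {2} {0, 2} (by decide)
  have := mono {2} {1, 2} (by decide)
  have := mono {0, 2} {0, 1, 2} (by decide)
  have := mono {1, 2} {0, 1, 2} (by decide)
  have := sub {0} {1} {0, 1} ∅ (by decide) (by decide)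
  have := sub {0} {2} {0, 2} ∅ (by decide) (by decide)
  have := sub {1} {2} {1, 2} ∅ (by decide) (by decide)
  have := sub {0} {1, 2} {0, 1, 2} ∅ (by decide) (by decide)
  have := sub {2} {0, 1} {0, 1, 2} ∅ (by decide) (by decide)
  have := sub {0, 2} {0, 1} {0, 1, 2} {0} (by decide) (by decide)
  have := sub {0, 1} {1, 2} {0, 1, 2} {1} (by decide) (by decide)
  have := sub {1, 2} {0, 2} {0, 1, 2} {2} (by decide) (by decide)
  rw [mimicCap, cutCap_cap7]
  by_cases h1 : (1 : Fin 5) ∈ A <;> by_cases h2 : (2 : Fin 5) ∈ A <;>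
    by_cases h3 : (3 : Fin 5) ∈ A <;> by_cases h4 : (4 : Fin 5) ∈ A <;>
    simp [Fin.univ_succ, filter_insert, filter_singleton, h0, h1, h2, h3, h4] <;> linarith

theorem exists_cutCap_mimicCap_eq (hempty : f ∅ = 0) (T : Finset (Fin 3)) :
    ∃ A, {0} ⊆ A ∧ Disjoint (T.image fun i => i.succ.castSucc) A ∧
      cutCap (mimicCap f) A = f T := by
  obtain rfl | rfl | rfl | rfl | rfl | rfl | rfl | rfl :
      T = ∅ ∨ T = {0} ∨ T = {1} ∨ T = {2} ∨ T = {0, 1} ∨ T = {0, 2} ∨ T = {1, 2} ∨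
        T = {0, 1, 2} := by
    revert T; decide
  · exact ⟨univ, by decide, by decide, by rw [cutCap_univ, hempty]⟩
  · exact ⟨{0, 2, 3, 4}, by decide, by decide, by simp [mimicCap, cutCap_cap7]⟩
  · exact ⟨{0, 1, 3, 4}, by decide, by decide, by simp [mimicCap, cutCap_cap7]⟩
  · exact ⟨{0, 1, 2, 4}, by decide, by decide, by simp [mimicCap, cutCap_cap7]⟩
  · exact ⟨{0, 3}, by decide, by decide, by simp [mimicCap, cutCap_cap7]⟩
  · exact ⟨{0, 2}, by decide, by decide, by simp [mimicCap, cutCap_cap7]; ring⟩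
  · exact ⟨{0, 1}, by decide, by decide, by simp [mimicCap, cutCap_cap7]⟩
  · exact ⟨{0}, by decide, by decide, by simp [mimicCap, cutCap_cap7]⟩

theorem minCut_mimicCap (hmono : Monotone f)
    (hsub : ∀ T₁ T₂, f (T₁ ∪ T₂) + f (T₁ ∩ T₂) ≤ f T₁ + f T₂) (hempty : f ∅ = 0)
    (T : Finset (Fin 3)) :
    minCut (mimicCap f) {0} (T.image fun i => i.succ.castSucc) = f T := by
  obtain ⟨A, hA0, hTA, hA⟩ := exists_cutCap_mimicCap_eq hempty T
  refine le_antisymm (hA ▸ minCut_le_cutCap hA0 hTA) ?_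
  obtain ⟨B, hB0, hTB, hB⟩ := exists_cutCap_eq_minCut (c := mimicCap f) (S := {0})
    (T := T.image fun i => i.succ.castSucc) (disjoint_image_of_notMem (fun i => by simp) T)
  calc f T ≤ f {i | i.succ.castSucc ∉ B} :=
        hmono fun i hi => mem_filter.2 ⟨mem_univ i, disjoint_left.1 hTB (mem_image_of_mem _ hi)⟩
    _ ≤ cutCap (mimicCap f) B :=
        le_cutCap_mimicCap hmono hsub hempty (singleton_subset_iff.1 hB0)
    _ = _ := hB

end MimickingNetwork

theorem stmt7_general {V : Type} [Fintype V] [DecidableEq V] (c : V → V → ℝ)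
    (hc : ∀ u v, 0 ≤ c u v) (s : V) (t : Fin 3 → V)
    (ht : Function.Injective t) (hs : s ∉ Set.range t) :
    ∀ T : Finset (Fin 3), T.Nonempty →
      minCut
        (cap7 (minCut c {s} {t 0})
              (minCut c {s} {t 0, t 1} - minCut c {s} {t 0})
              (minCut c {s} {t 0, t 1, t 2} - minCut c {s} {t 0, t 1})
              (minCut c {s} {t 1, t 2} + minCut c {s} {t 0}
                 - minCut c {s} {t 0, t 1, t 2})
              (minCut c {s} {t 0, t 2} + minCut c {s} {t 0, t 1}
                 - minCut c {s} {t 0} - minCut c {s} {t 0, t 1, t 2})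
              (minCut c {s} {t 1} + minCut c {s} {t 0} - minCut c {s} {t 0, t 1})
              (minCut c {s} {t 2} + minCut c {s} {t 0, t 1}
                 - minCut c {s} {t 0, t 1, t 2}))
        {(0 : Fin 5)} (T.image fun i => i.succ.castSucc) =
      minCut c {s} (T.image t) := by
  intro T _
  have hS : ∀ i, t i ∉ ({s} : Finset V) := fun i h => hs ⟨i, mem_singleton.1 h⟩
  have key := minCut_mimicCap (monotone_minCut_image hS)
    (minCut_image_union_add_minCut_image_inter_le hc ht hS) (minCut_empty hc {s}) T
  simpa [mimicCap, image_insert] using key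

theorem stmt7 {V : Type} [Fintype V] [DecidableEq V] (c : V → V → ℝ)
    (hc : ∀ u v, 0 ≤ c u v) (s : V) (t : Fin 3 → V)
    (ht : Function.Injective t) (hs : s ∉ Set.range t)
    (h1 : minCut c {s} {t 1} ≤ minCut c {s} {t 0})
    (h2 : minCut c {s} {t 2} ≤ minCut c {s} {t 0})
    (h3 : minCut c {s} {t 0, t 2} ≤ minCut c {s} {t 0, t 1}) :
    ∀ T : Finset (Fin 3), T.Nonempty →
      minCut
        (cap7 (minCut c {s} {t 0})
              (minCut c {s} {t 0, t 1} - minCut c {s} {t 0})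
              (minCut c {s} {t 0, t 1, t 2} - minCut c {s} {t 0, t 1})
              (minCut c {s} {t 1, t 2} + minCut c {s} {t 0}
                 - minCut c {s} {t 0, t 1, t 2})
              (minCut c {s} {t 0, t 2} + minCut c {s} {t 0, t 1}
                 - minCut c {s} {t 0} - minCut c {s} {t 0, t 1, t 2})
              (minCut c {s} {t 1} + minCut c {s} {t 0} - minCut c {s} {t 0, t 1})
              (minCut c {s} {t 2} + minCut c {s} {t 0, t 1}
                 - minCut c {s} {t 0, t 1, t 2}))
        {(0 : Fin 5)} (T.image fun i => i.succ.castSucc) =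
      minCut c {s} (T.image t) :=
  stmt7_general c hc s t ht hs
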